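/- Let α > −1, β > −1, N ∈ ℕ, and let w be any real number. Define the Hahn moments μ_n = Σ_{x=0}^N x^n · ((α+1)_x/x!) · ((β+1)_{N−x}/(N−x)!). Then the series Σ_{n=0}^∞ μ_n·w^n/n! converges absolutely and equals ((α+β+2)_N/N!) · Σ_{k=0}^N ((−N)_k·(α+1)_k/((α+β+2)_k·k!)) · (1 − e^w)^k. -/
import Mathlib

/-- The Pochhammer symbol (rising factorial) `(a)_x = a (a+1) ⋯ (a+x-1)`. -/
def poch (a : ℝ) (x : ℕ) : ℝ := ∏ i ∈ Finset.range x, (a + i)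

lemma poch_zero (a : ℝ) : poch a 0 = 1 := rfl

lemma poch_succ (a : ℝ) (n : ℕ) : poch a (n + 1) = poch a n * (a + n) :=
  Finset.prod_range_succ _ _

lemma poch_add (a : ℝ) (m n : ℕ) : poch a (m + n) = poch a m * poch (a + m) n := by
  unfold poch
  rw [Finset.prod_range_add]
  congr 1
  refine Finset.prod_congr rfl fun i _ => ?_
  push_cast
  ring

lemma poch_succ' (a : ℝ) (n : ℕ) : poch a (n + 1) = a * poch (a + 1) n := by
  have := poch_add a 1 n
  simp only [poch, Finset.prod_range_one, add_zero, Nat.cast_zero, Nat.cast_one] at this ⊢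
  rw [add_comm 1 n] at this
  simpa [poch] using this

lemma poch_pos {a : ℝ} (ha : 0 < a) (n : ℕ) : 0 < poch a n :=
  Finset.prod_pos fun i _ => by positivity

lemma poch_neg_nat (N : ℕ) : ∀ j : ℕ, j ≤ N →
    poch (-(N : ℝ)) j = (-1) ^ j * (N.factorial : ℝ) / ((N - j).factorial : ℝ) := by
  intro j
  induction j with
  | zero =>
    intro _
    have : (N.factorial : ℝ) ≠ 0 := by positivity
    simp [poch_zero, this]
  | succ j ih =>
    intro hj
    have hj' : j ≤ N := by omega
    have hji : j < N := by omega
    rw [poch_succ, ih hj']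
    have hfac : (N - j) = (N - (j + 1)) + 1 := by omega
    have : ((N - j).factorial : ℝ) = ((N - j : ℕ) : ℝ) * ((N - (j+1)).factorial : ℝ) := by
      rw [hfac, Nat.factorial_succ]
      push_cast
      ring_nf
    have hNj : ((N - j : ℕ) : ℝ) = (N : ℝ) - (j : ℕ) := by
      push_cast [Nat.cast_sub hj']
      ring
    rw [this, hNj]
    have hne : (N : ℝ) - (j : ℕ) ≠ 0 := by
      have h1 : (j : ℝ) < (N : ℝ) := by exact_mod_cast hji
      linarith
    have hne2 : ((N - (j+1)).factorial : ℝ) ≠ 0 := by positivity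
    rw [pow_succ]
    field_simp
    ring

lemma vandermonde_poch (M : ℕ) : ∀ a b : ℝ,
    ∑ m ∈ Finset.range (M + 1),
        poch a m / m.factorial * (poch b (M - m) / (M - m).factorial)
      = poch (a + b) M / M.factorial := by
  induction M with
  | zero => intro a b; simp [poch_zero]
  | succ M ih =>
    intro a b
    have hM1 : ((M : ℝ) + 1) ≠ 0 := by positivity
    apply mul_left_cancel₀ hM1
    rw [Finset.mul_sum]
    have split : ∀ m ∈ Finset.range (M + 2),
        ((M : ℝ) + 1) * (poch a m / m.factorial * (poch b (M + 1 - m) / (M + 1 - m).factorial))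
        = (m : ℝ) * (poch a m / m.factorial * (poch b (M + 1 - m) / (M + 1 - m).factorial))
          + ((M + 1 - m : ℕ) : ℝ) *
              (poch a m / m.factorial * (poch b (M + 1 - m) / (M + 1 - m).factorial)) := by
      intro m hm
      rw [Finset.mem_range] at hm
      have : ((M + 1 - m : ℕ) : ℝ) = (M : ℝ) + 1 - m := by
        have : m ≤ M + 1 := by omega
        push_cast [Nat.cast_sub this]
        ring
      rw [this]; ring
    rw [Finset.sum_congr rfl split, Finset.sum_add_distrib]
    have first : ∑ m ∈ Finset.range (M + 2),
        (m : ℝ) * (poch a m / m.factorial * (poch b (M + 1 - m) / (M + 1 - m).factorial))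
        = a * ∑ m ∈ Finset.range (M + 1),
            poch (a + 1) m / m.factorial * (poch b (M - m) / (M - m).factorial) := by
      rw [Finset.sum_range_succ' (fun m => (m : ℝ) *
        (poch a m / m.factorial * (poch b (M + 1 - m) / (M + 1 - m).factorial))) (M + 1)]
      simp only [Nat.cast_zero, zero_mul, add_zero]
      rw [Finset.mul_sum]
      refine Finset.sum_congr rfl fun i hi => ?_
      rw [Finset.mem_range] at hi
      have h1 : M + 1 - (i + 1) = M - i := by omega
      rw [h1, poch_succ', Nat.factorial_succ]
      have h2 : (i.factorial : ℝ) ≠ 0 := by positivity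
      have h3 : ((i : ℝ) + 1) ≠ 0 := by positivity
      push_cast
      field_simp
    have second : ∑ m ∈ Finset.range (M + 2),
        ((M + 1 - m : ℕ) : ℝ) *
          (poch a m / m.factorial * (poch b (M + 1 - m) / (M + 1 - m).factorial))
        = b * ∑ m ∈ Finset.range (M + 1),
            poch a m / m.factorial * (poch (b + 1) (M - m) / (M - m).factorial) := by
      rw [Finset.sum_range_succ]
      simp only [Nat.sub_self, Nat.cast_zero, zero_mul, add_zero]
      rw [Finset.mul_sum]
      refine Finset.sum_congr rfl fun i hi => ?_
      rw [Finset.mem_range] at hi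
      have h1 : M + 1 - i = (M - i) + 1 := by omega
      rw [h1, poch_succ', Nat.factorial_succ]
      have h2 : ((M - i).factorial : ℝ) ≠ 0 := by positivity
      have h3 : (((M - i : ℕ) : ℝ) + 1) ≠ 0 := by positivity
      push_cast
      field_simp
    rw [first, second, ih (a + 1) b, ih a (b + 1)]
    have e1 : a + 1 + b = a + b + 1 := by ring
    have e2 : a + (b + 1) = a + b + 1 := by ring
    rw [e1, e2]
    rw [poch_succ' (a + b) M, Nat.factorial_succ]
    have h2 : (M.factorial : ℝ) ≠ 0 := by positivity
    push_cast
    field_simp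

lemma hahn_shifted (α β : ℝ) (N j : ℕ) (hj : j ≤ N) :
    ∑ x ∈ Finset.Ico j (N + 1),
        (x.choose j : ℝ) * (poch (α + 1) x / x.factorial) *
          (poch (β + 1) (N - x) / (N - x).factorial)
      = poch (α + 1) j / j.factorial *
          (poch (α + β + 2 + j) (N - j) / (N - j).factorial) := by
  rw [Finset.sum_Ico_eq_sum_range]
  have hrw : N + 1 - j = (N - j) + 1 := by omega
  rw [hrw]
  have key : ∀ m ∈ Finset.range ((N - j) + 1),
      ((j + m).choose j : ℝ) * (poch (α + 1) (j + m) / (j + m).factorial) *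
          (poch (β + 1) (N - (j + m)) / (N - (j + m)).factorial)
        = poch (α + 1) j / j.factorial *
            (poch (α + 1 + j) m / m.factorial *
              (poch (β + 1) ((N - j) - m) / ((N - j) - m).factorial)) := by
    intro m hm
    rw [Finset.mem_range] at hm
    have hm' : m ≤ N - j := by omega
    have h1 : N - (j + m) = (N - j) - m := by omega
    have hchoose : ((j + m).choose j : ℝ) * (j.factorial : ℝ) * (m.factorial : ℝ)
        = ((j + m).factorial : ℝ) := by
      have := Nat.choose_mul_factorial_mul_factorial (Nat.le_add_right j m)
      have h2 : j + m - j = m := by omega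
      rw [h2] at this
      exact_mod_cast this
    rw [h1, poch_add (α + 1) j m]
    have hjf : (j.factorial : ℝ) ≠ 0 := by positivity
    have hmf : (m.factorial : ℝ) ≠ 0 := by positivity
    have hjmf : ((j + m).factorial : ℝ) ≠ 0 := by positivity
    have hjf : (j.factorial : ℝ) ≠ 0 := by positivity
    have hchoose' : ((j + m).choose j : ℝ)
        = ((j + m).factorial : ℝ) / ((j.factorial : ℝ) * (m.factorial : ℝ)) := by
      rw [eq_div_iff (by positivity), ← mul_assoc, hchoose]
    rw [hchoose']
    field_simp
  rw [Finset.sum_congr rfl key, ← Finset.mul_sum]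
  rw [vandermonde_poch (N - j) (α + 1 + j) (β + 1)]
  have : α + 1 + (j : ℝ) + (β + 1) = α + β + 2 + j := by ring
  rw [this]

lemma hahn_poly (α β : ℝ) (h2 : 0 < α + β + 2) (N : ℕ) (z : ℝ) :
    ∑ x ∈ Finset.range (N + 1),
        z ^ x * (poch (α + 1) x / x.factorial) * (poch (β + 1) (N - x) / (N - x).factorial)
      = (poch (α + β + 2) N / N.factorial) *
          ∑ k ∈ Finset.range (N + 1),
            (poch (-(N : ℝ)) k * poch (α + 1) k / (poch (α + β + 2) k * k.factorial)) *
              (1 - z) ^ k := by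
  set t : ℝ := 1 - z with ht
  -- expand z ^ x
  have hz : z = (-t) + 1 := by rw [ht]; ring
  have step1 : ∀ x : ℕ, z ^ x = ∑ j ∈ Finset.range (x + 1), (x.choose j : ℝ) * (-t) ^ j := by
    intro x
    rw [hz, add_pow]
    refine Finset.sum_congr rfl fun j hj => ?_
    ring
  -- LHS as double sum
  have lhs_eq : ∑ x ∈ Finset.range (N + 1),
      z ^ x * (poch (α + 1) x / x.factorial) * (poch (β + 1) (N - x) / (N - x).factorial)
      = ∑ j ∈ Finset.range (N + 1), (-t) ^ j *
          ∑ x ∈ Finset.Ico j (N + 1),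
            (x.choose j : ℝ) * (poch (α + 1) x / x.factorial) *
              (poch (β + 1) (N - x) / (N - x).factorial) := by
    have inner : ∀ x ∈ Finset.range (N + 1),
        z ^ x * (poch (α + 1) x / x.factorial) * (poch (β + 1) (N - x) / (N - x).factorial)
        = ∑ j ∈ Finset.range (N + 1),
            (if j ≤ x then ((x.choose j : ℝ) * (-t) ^ j *
              (poch (α + 1) x / x.factorial) * (poch (β + 1) (N - x) / (N - x).factorial))
             else 0) := by
      intro x hx
      rw [Finset.mem_range] at hx
      rw [step1 x, Finset.sum_mul, Finset.sum_mul]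
      rw [← Finset.sum_filter]
      have hfil : (Finset.range (N + 1)).filter (fun j => j ≤ x) = Finset.range (x + 1) := by
        ext j
        simp only [Finset.mem_filter, Finset.mem_range]
        omega
      rw [hfil]
    rw [Finset.sum_congr rfl inner, Finset.sum_comm]
    refine Finset.sum_congr rfl fun j hj => ?_
    rw [← Finset.sum_filter]
    have hfil : (Finset.range (N + 1)).filter (fun x => j ≤ x) = Finset.Ico j (N + 1) := by
      ext x
      simp only [Finset.mem_filter, Finset.mem_range, Finset.mem_Ico]
      omega
    rw [hfil, Finset.mul_sum]
    refine Finset.sum_congr rfl fun x hx => ?_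
    ring
  rw [lhs_eq, Finset.mul_sum]
  refine Finset.sum_congr rfl fun k hk => ?_
  rw [Finset.mem_range] at hk
  have hkN : k ≤ N := by omega
  rw [hahn_shifted α β N k hkN, poch_neg_nat N k hkN]
  have hsplit : poch (α + β + 2) N = poch (α + β + 2) k * poch (α + β + 2 + k) (N - k) := by
    have : k + (N - k) = N := by omega
    rw [← this, poch_add]
    have h3 : k + (N - k) - k = N - k := by omega
    rw [h3]
  rw [hsplit]
  have hp : poch (α + β + 2) k ≠ 0 := ne_of_gt (poch_pos h2 k)
  have hNf : (N.factorial : ℝ) ≠ 0 := by positivity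
  have hkf : (k.factorial : ℝ) ≠ 0 := by positivity
  have hNkf : ((N - k).factorial : ℝ) ≠ 0 := by positivity
  have hneg : (-t) ^ k = (-1) ^ k * t ^ k := by rw [neg_pow]
  rw [hneg]
  field_simp

/-- The exponential generating function of the Hahn moments:
`Σ_n μ_n w^n/n! = ((α+β+2)_N/N!) Σ_{k=0}^N ((-N)_k (α+1)_k/((α+β+2)_k k!)) (1-e^w)^k`,
the series converging absolutely. -/
theorem hahn_moments_egf
    (α β : ℝ) (hα : α > -1) (hβ : β > -1) (N : ℕ) (w : ℝ)
    (mu : ℕ → ℝ)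
    (hmu : ∀ n : ℕ, mu n =
      ∑ x ∈ Finset.range (N + 1),
        (x : ℝ) ^ n * (poch (α + 1) x / x.factorial) *
          (poch (β + 1) (N - x) / (N - x).factorial)) :
    (Summable fun n : ℕ => |mu n * w ^ n / n.factorial|) ∧
    ∑' n : ℕ, mu n * w ^ n / n.factorial =
      (poch (α + β + 2) N / N.factorial) *
        ∑ k ∈ Finset.range (N + 1),
          (poch (-(N : ℝ)) k * poch (α + 1) k / (poch (α + β + 2) k * k.factorial)) *
            (1 - Real.exp w) ^ k := by
  set c : ℕ → ℝ := fun x =>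
    poch (α + 1) x / x.factorial * (poch (β + 1) (N - x) / (N - x).factorial) with hc
  have hg : ∀ n : ℕ, mu n * w ^ n / n.factorial
      = ∑ x ∈ Finset.range (N + 1), c x * (((x : ℝ) * w) ^ n / n.factorial) := by
    intro n
    rw [hmu n, Finset.sum_mul, Finset.sum_div]
    refine Finset.sum_congr rfl fun x hx => ?_
    rw [hc]
    simp only [mul_pow]
    ring
  have hsum : ∀ x : ℕ, Summable fun n : ℕ => c x * (((x : ℝ) * w) ^ n / n.factorial) :=
    fun x => (Real.summable_pow_div_factorial ((x : ℝ) * w)).mul_left (c x)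
  have habs_sum : Summable fun n : ℕ =>
      ∑ x ∈ Finset.range (N + 1), |c x| * (|(x : ℝ) * w| ^ n / n.factorial) :=
    summable_sum fun x _ => (Real.summable_pow_div_factorial |(x : ℝ) * w|).mul_left |c x|
  constructor
  · refine Summable.of_nonneg_of_le (fun n => abs_nonneg _) (fun n => ?_) habs_sum
    rw [hg n]
    refine (Finset.abs_sum_le_sum_abs _ _).trans_eq ?_
    refine Finset.sum_congr rfl fun x hx => ?_
    rw [abs_mul, abs_div, abs_pow, Nat.abs_cast]
  · have hexp : ∀ x : ℕ, ∑' n : ℕ, (((x : ℝ) * w) ^ n / n.factorial) = Real.exp w ^ x := by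
      intro x
      rw [← Real.exp_nat_mul w x]
      rw [Real.exp_eq_exp_ℝ, NormedSpace.exp_eq_tsum_div]
    calc ∑' n : ℕ, mu n * w ^ n / n.factorial
        = ∑' n : ℕ, ∑ x ∈ Finset.range (N + 1), c x * (((x : ℝ) * w) ^ n / n.factorial) :=
          tsum_congr hg
      _ = ∑ x ∈ Finset.range (N + 1), ∑' n : ℕ, c x * (((x : ℝ) * w) ^ n / n.factorial) :=
          Summable.tsum_finsetSum fun x _ => hsum x
      _ = ∑ x ∈ Finset.range (N + 1), c x * Real.exp w ^ x := by
          refine Finset.sum_congr rfl fun x hx => ?_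
          rw [tsum_mul_left, hexp x]
      _ = ∑ x ∈ Finset.range (N + 1), Real.exp w ^ x * (poch (α + 1) x / x.factorial) *
            (poch (β + 1) (N - x) / (N - x).factorial) := by
          refine Finset.sum_congr rfl fun x hx => ?_
          rw [hc]; ring
      _ = _ := hahn_poly α β (by linarith) N (Real.exp w)
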